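/- Let K be a field, R₁ = K[X]/(X²), and S a commutative ring. If every S-module N fits in a short exact sequence 0 → N → Q → N → 0 of S-modules with pd_S(Q) ≤ n, then every (R₁ × S)-module M fits in a short exact sequence 0 → M → P → M → 0 of (R₁ × S)-modules with pd_{R₁ × S}(P) ≤ n. -/

import Mathlib

/-!
Over a product ring `A × B` every module `M` splits as `(A ⊗ M) × (B ⊗ M)`. Since `A` and `B`
are projective over `A × B`, projective resolutions over a factor remain projective resolutions
over the product, so short exact sequences `0 → M → P → M → 0` over the two factors multiply to
one over `A × B`, with `pd P` the larger of the two.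

Over `R₁ = K[t]/(t²)` take `P = R₁ ⊗_K A`, which is free. The multiplication map `P → A` has
kernel `A` with `t` acting by `-t`. To untwist it, choose a `K`-linear involution `g` of `A`
that fixes `tA` and anticommutes with `t` (the reflection in `ker t` along a complement). Then
`0 → A → P → A → 0` is exact, with maps `a ↦ 1 ⊗ ta + t ⊗ a` and `r ⊗ a ↦ r • g a`.
-/
universe u

/-- Projective dimension of the module `M` is at most `n`. -/
def pdLE (R : Type u) [CommRing R] : ℕ → (M : Type u) → [AddCommGroup M] → [Module R M] → Prop
  | 0, M, _, _ => Module.Projective R M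
  | n+1, M, _, _ => ∃ (P : Type u) (_ : AddCommGroup P) (_ : Module R P) (f : P →ₗ[R] M),
      Module.Projective R P ∧ Function.Surjective f ∧ pdLE R n (LinearMap.ker f)

/-- The ring `K[X]/(X²)`. -/
def DualNumbersRing (K : Type u) [Field K] : Type u :=
  Polynomial K ⧸ Ideal.span {(Polynomial.X ^ 2 : Polynomial K)}

noncomputable instance (K : Type u) [Field K] : CommRing (DualNumbersRing K) :=
  Ideal.Quotient.commRing _

open TensorProduct

theorem Function.Exact.prodMap {M N P M' N' P' : Type*} [Zero P] [Zero P']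
    {f : M → N} {g : N → P} {f' : M' → N'} {g' : N' → P'}
    (h : Function.Exact f g) (h' : Function.Exact f' g') :
    Function.Exact (Prod.map f f') (Prod.map g g') := fun y => by
  simp only [Prod.map, Prod.mk_eq_zero, Set.range_prodMap, Set.mem_prod, h y.1, h' y.2]

def Submodule.prodEquiv {R M N : Type*} [Semiring R] [AddCommMonoid M] [Module R M]
    [AddCommMonoid N] [Module R N] (p : Submodule R M) (q : Submodule R N) :
    p.prod q ≃ₗ[R] p × q where
  toFun x := (⟨x.1.1, x.2.1⟩, ⟨x.1.2, x.2.2⟩)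
  invFun y := ⟨(y.1, y.2), y.1.2, y.2.2⟩
  map_add' _ _ := rfl
  map_smul' _ _ := rfl
  left_inv _ := rfl
  right_inv _ := rfl

theorem Module.Projective.trans (R A P : Type*) [CommSemiring R] [Semiring A] [Algebra R A]
    [AddCommMonoid P] [Module A P] [Module R P] [IsScalarTower R A P]
    [Module.Projective R A] [Module.Projective A P] : Module.Projective R P := by
  classical
  obtain ⟨s, hs⟩ := Module.projective_def'.1 ‹Module.Projective A P›
  have : Module.Projective R (P →₀ A) := .of_equiv' (finsuppLequivDFinsupp R).symm
  exact .of_split (s.restrictScalars R) ((Finsupp.linearCombination A id).restrictScalars R)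
    (LinearMap.ext fun x => congr($hs x))

section ProjectiveDimension

variable {R : Type u} [CommRing R]

theorem pdLE_of_linearEquiv : ∀ (n : ℕ) {M N : Type u} [AddCommGroup M] [Module R M]
    [AddCommGroup N] [Module R N], (M ≃ₗ[R] N) → pdLE R n M → pdLE R n N
  | 0, _, _, _, _, _, _, e, h => by
    have : Module.Projective R _ := h
    exact Module.Projective.of_equiv' e
  | _ + 1, _, _, _, _, _, _, e, ⟨P, _, _, f, hP, hf, hker⟩ => by
    refine ⟨P, _, _, e.toLinearMap ∘ₗ f, hP, e.surjective.comp hf, ?_⟩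
    rwa [LinearMap.ker_comp_of_ker_eq_bot f e.ker]

theorem pdLE_of_projective : ∀ (n : ℕ) {M : Type u} [AddCommGroup M] [Module R M]
    [Module.Projective R M], pdLE R n M
  | 0, _, _, _, h => h
  | n + 1, M, _, _, h => by
    refine ⟨M, _, _, LinearMap.id, h, Function.surjective_id, ?_⟩
    have : Subsingleton (LinearMap.ker (LinearMap.id : M →ₗ[R] M)) := by
      rw [LinearMap.ker_id]; infer_instance
    exact pdLE_of_projective n

theorem pdLE_prod : ∀ (n : ℕ) {M N : Type u} [AddCommGroup M] [Module R M]
    [AddCommGroup N] [Module R N], pdLE R n M → pdLE R n N → pdLE R n (M × N)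
  | 0, M, N, _, _, _, _, hM, hN => by
    have : Module.Projective R M := hM
    have : Module.Projective R N := hN
    exact (inferInstance : Module.Projective R (M × N))
  | n + 1, _, _, _, _, _, _, ⟨P, _, _, f, hP, hf, hkf⟩, ⟨Q, _, _, g, hQ, hg, hkg⟩ => by
    refine ⟨P × Q, inferInstance, inferInstance, f.prodMap g, inferInstance, hf.prodMap hg, ?_⟩
    rw [LinearMap.ker_prodMap]
    exact pdLE_of_linearEquiv n (Submodule.prodEquiv _ _).symm (pdLE_prod n hkf hkg)

theorem pdLE_of_isScalarTower {A : Type u} [CommRing A] [Algebra R A] [Module.Projective R A] :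
    ∀ (n : ℕ) {M : Type u} [AddCommGroup M] [Module A M] [Module R M] [IsScalarTower R A M],
      pdLE A n M → pdLE R n M
  | 0, M, _, _, _, _, h => by
    have : Module.Projective A M := h
    exact Module.Projective.trans R A M
  | n + 1, _, _, _, _, _, ⟨P, _, _, f, hP, hf, hker⟩ => by
    let := Module.compHom P (algebraMap R A)
    have : IsScalarTower R A P := .of_algebraMap_smul fun _ _ => rfl
    have hker' : pdLE R n (LinearMap.ker f) := pdLE_of_isScalarTower n hker
    exact ⟨P, _, _, f.restrictScalars R, Module.Projective.trans R A P, hf, hker'⟩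

end ProjectiveDimension

def HasSelfExtensionPdLE (R : Type u) [CommRing R] (n : ℕ) (M : Type u) [AddCommGroup M]
    [Module R M] : Prop :=
  ∃ (P : Type u) (_ : AddCommGroup P) (_ : Module R P) (i : M →ₗ[R] P) (p : P →ₗ[R] M),
    Function.Injective i ∧ Function.Surjective p ∧ Function.Exact i p ∧ pdLE R n P

namespace HasSelfExtensionPdLE

variable {R : Type u} [CommRing R] {n : ℕ} {M N : Type u} [AddCommGroup M] [Module R M]
  [AddCommGroup N] [Module R N]

theorem of_linearEquiv (e : M ≃ₗ[R] N) : HasSelfExtensionPdLE R n M → HasSelfExtensionPdLE R n N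
  | ⟨P, _, _, i, p, hi, hp, hip, hP⟩ =>
    ⟨P, _, _, i ∘ₗ e.symm.toLinearMap, e.toLinearMap ∘ₗ p, hi.comp e.symm.injective,
      e.surjective.comp hp,
      LinearEquiv.postcomp_exact_iff_exact.2 (LinearEquiv.precomp_exact_iff_exact.2 hip), hP⟩

theorem prod :
    HasSelfExtensionPdLE R n M → HasSelfExtensionPdLE R n N → HasSelfExtensionPdLE R n (M × N)
  | ⟨P, _, _, i, p, hi, hp, hip, hP⟩, ⟨Q, _, _, j, q, hj, hq, hjq, hQ⟩ =>
    ⟨P × Q, inferInstance, inferInstance, i.prodMap j, p.prodMap q, hi.prodMap hj,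
      hp.prodMap hq, hip.prodMap hjq, pdLE_prod n hP hQ⟩

theorem of_isScalarTower {A : Type u} [CommRing A] [Algebra R A] [Module.Projective R A]
    [Module A M] [IsScalarTower R A M] :
    HasSelfExtensionPdLE A n M → HasSelfExtensionPdLE R n M
  | ⟨P, _, _, i, p, hi, hp, hip, hP⟩ => by
    let := Module.compHom P (algebraMap R A)
    have : IsScalarTower R A P := .of_algebraMap_smul fun _ _ => rfl
    exact ⟨P, _, _, i.restrictScalars R, p.restrictScalars R, hi, hp, hip,
      pdLE_of_isScalarTower n hP⟩

end HasSelfExtensionPdLE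

section ProdRing

variable {R A B : Type u} [CommRing R] [CommRing A] [CommRing B] [Algebra R A] [Algebra R B]

noncomputable def TensorProduct.equivProdOfBijective
    (h : Function.Bijective (algebraMap R (A × B))) (M : Type u) [AddCommGroup M] [Module R M] :
    M ≃ₗ[R] (A ⊗[R] M) × (B ⊗[R] M) :=
  (TensorProduct.lid R M).symm ≪≫ₗ
    TensorProduct.congr (LinearEquiv.ofBijective (Algebra.linearMap R (A × B)) h) (.refl R M) ≪≫ₗ
    TensorProduct.prodLeft R R A B M

theorem HasSelfExtensionPdLE.of_bijective_algebraMap_prod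
    (h : Function.Bijective (algebraMap R (A × B))) {n : ℕ}
    (hA : ∀ (N : Type u) [AddCommGroup N] [Module A N], HasSelfExtensionPdLE A n N)
    (hB : ∀ (N : Type u) [AddCommGroup N] [Module B N], HasSelfExtensionPdLE B n N)
    (M : Type u) [AddCommGroup M] [Module R M] : HasSelfExtensionPdLE R n M := by
  have : Module.Projective R (A × B) :=
    .of_equiv' (LinearEquiv.ofBijective (Algebra.linearMap R (A × B)) h)
  have : Module.Projective R A :=
    .of_split (LinearMap.inl R A B) (LinearMap.fst R A B) (LinearMap.fst_comp_inl R A B)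
  have : Module.Projective R B :=
    .of_split (LinearMap.inr R A B) (LinearMap.snd R A B) (LinearMap.snd_comp_inr R A B)
  exact (((hA _).of_isScalarTower).prod (hB _).of_isScalarTower).of_linearEquiv
    (TensorProduct.equivProdOfBijective h M).symm

end ProdRing

theorem LinearMap.exists_involution_of_comp_self_eq_zero {K V : Type*} [DivisionRing K]
    [AddCommGroup V] [Module K V] (T : V →ₗ[K] V) (hT : T ∘ₗ T = 0) :
    ∃ g : V →ₗ[K] V, (∀ x, g (g x) = x) ∧ (∀ x, g (T x) = T x) ∧ ∀ x, T (g x) = -T x := by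
  obtain ⟨C, hC⟩ := (LinearMap.ker T).exists_isCompl
  set π := (LinearMap.ker T).projection C hC
  have hTπ : ∀ x, T (π x) = 0 := fun x => Submodule.projection_apply_mem hC x
  have hπ : ∀ x, T x = 0 → π x = x := fun x hx => Submodule.projection_apply_of_mem_left hC hx
  refine ⟨π + π - LinearMap.id, fun x => ?_, fun x => ?_, fun x => ?_⟩ <;>
    simp only [LinearMap.sub_apply, LinearMap.add_apply, LinearMap.id_apply, map_sub, map_add]
  · rw [hπ _ (hTπ x)]; abel
  · rw [hπ _ (LinearMap.congr_fun hT x)]; abel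
  · rw [hTπ]; abel

section BasisOneSquareZero

variable {K R : Type*} [CommSemiring K] [Semiring R] [Algebra K R] (b : Module.Basis (Fin 2) K R)

theorem LinearMap.map_smul_of_map_basis_smul (hb0 : b 0 = 1) {M N : Type*} [AddCommMonoid M]
    [Module R M] [Module K M] [IsScalarTower K R M] [AddCommMonoid N] [Module R N] [Module K N]
    [IsScalarTower K R N] (f : M →ₗ[K] N) (hf : ∀ m, f (b 1 • m) = b 1 • f m) (r : R) (m : M) :
    f (r • m) = r • f m := by
  have hr : r = b.repr r 0 • 1 + b.repr r 1 • b 1 := by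
    conv_lhs => rw [← b.sum_repr r, Fin.sum_univ_two, hb0]
  rw [hr]
  simp only [add_smul, smul_assoc, one_smul, map_add, map_smul, hf]

theorem TensorProduct.exists_eq_one_tmul_add_basis_tmul (hb0 : b 0 = 1) {A : Type*}
    [AddCommMonoid A] [Module K A] (w : R ⊗[K] A) : ∃ u v : A, w = 1 ⊗ₜ u + b 1 ⊗ₜ v := by
  obtain ⟨c, rfl⟩ := TensorProduct.eq_repr_basis_left b w
  exact ⟨c 0, c 1, by rw [Finsupp.sum_fintype _ _ (fun _ => tmul_zero _ _), Fin.sum_univ_two, hb0]⟩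

theorem TensorProduct.equivFinsuppOfBasisLeft_one_tmul_add_basis_tmul (hb0 : b 0 = 1) {A : Type*}
    [AddCommMonoid A] [Module K A] (u v : A) :
    equivFinsuppOfBasisLeft b (1 ⊗ₜ u + b 1 ⊗ₜ v) 1 = v := by
  simp [← hb0]

end BasisOneSquareZero

theorem hasSelfExtensionPdLE_of_basis {K R : Type u} [Field K] [CommRing R] [Algebra K R]
    (b : Module.Basis (Fin 2) K R) (hb0 : b 0 = 1) (hb1 : b 1 * b 1 = 0) (n : ℕ)
    (A : Type u) [AddCommGroup A] [Module R A] : HasSelfExtensionPdLE R n A := by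
  let := Module.compHom A (algebraMap K R)
  have : IsScalarTower K R A := .of_algebraMap_smul fun _ _ => rfl
  let T : A →ₗ[K] A := (LinearMap.lsmul R A (b 1)).restrictScalars K
  have hT : ∀ a, T a = b 1 • a := fun _ => rfl
  obtain ⟨g, hgg, hgT, hTg⟩ := T.exists_involution_of_comp_self_eq_zero <| LinearMap.ext fun a => by
    rw [LinearMap.comp_apply, hT, hT, smul_smul, hb1, zero_smul, LinearMap.zero_apply]
  let i₀ : A →ₗ[K] R ⊗[K] A := TensorProduct.mk K R A 1 ∘ₗ T + TensorProduct.mk K R A (b 1)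
  have hi₀ : ∀ a, i₀ a = 1 ⊗ₜ T a + b 1 ⊗ₜ a := fun _ => rfl
  let i : A →ₗ[R] R ⊗[K] A :=
    { i₀ with
      map_smul' := i₀.map_smul_of_map_basis_smul b hb0 fun a => by
        rw [hi₀, hi₀, smul_add, smul_tmul', smul_tmul', hT, hT, smul_smul, hb1, zero_smul,
          tmul_zero, zero_add, smul_eq_mul, smul_eq_mul, mul_one, hb1, zero_tmul, add_zero] }
  have hi : ∀ a, i a = 1 ⊗ₜ T a + b 1 ⊗ₜ a := fun _ => rfl
  let p : R ⊗[K] A →ₗ[R] A := LinearMap.liftBaseChange R g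
  have hp : ∀ u v, p (1 ⊗ₜ u + b 1 ⊗ₜ v) = g u + T (g v) := fun u v => by
    simp [p, hT]
  refine ⟨R ⊗[K] A, _, _, i, p, fun a a' h => ?_, fun a => ⟨1 ⊗ₜ g a, ?_⟩, fun w => ?_,
    pdLE_of_projective n⟩
  · simpa only [hi, equivFinsuppOfBasisLeft_one_tmul_add_basis_tmul b hb0] using
      congr(equivFinsuppOfBasisLeft b $h 1)
  · simpa [p] using hgg a
  · obtain ⟨u, v, rfl⟩ := exists_eq_one_tmul_add_basis_tmul b hb0 w
    refine ⟨fun h => ⟨v, ?_⟩, fun ⟨v', h⟩ => ?_⟩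
    · have hu : u = T v := by
        have := congr(g $h)
        rwa [hp, map_add, hgg, hgT, hTg, map_zero, ← sub_eq_add_neg, sub_eq_zero] at this
      rw [hi, hu]
    · rw [← h, hi, hp, hgT, hTg, add_neg_cancel]

open Polynomial in
theorem AdjoinRoot.exists_basis_X_sq (K : Type u) [Field K] :
    ∃ b : Module.Basis (Fin 2) K (AdjoinRoot (X ^ 2 : K[X])), b 0 = 1 ∧ b 1 * b 1 = 0 := by
  let pb := AdjoinRoot.powerBasis' (monic_X_pow (R := K) 2)
  have hb : ∀ i, pb.basis.reindex (finCongr (natDegree_X_pow 2)) i = root (X ^ 2) ^ (i : ℕ) :=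
    fun i => by simp [pb]; rfl
  refine ⟨pb.basis.reindex (finCongr (natDegree_X_pow 2)), ?_, ?_⟩
  · simp [hb]
  · rw [hb, Fin.val_one, pow_one, ← pow_two, ← mk_X, ← map_pow]
    exact mk_self

open Polynomial in
theorem DualNumbersRing.hasSelfExtensionPdLE (K : Type u) [Field K] (n : ℕ) (N : Type u)
    [AddCommGroup N] [Module (DualNumbersRing K) N] :
    HasSelfExtensionPdLE (DualNumbersRing K) n N := by
  obtain ⟨b, hb0, hb1⟩ := AdjoinRoot.exists_basis_X_sq K
  let : Module (AdjoinRoot (X ^ 2 : K[X])) N := ‹Module (DualNumbersRing K) N›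
  exact hasSelfExtensionPdLE_of_basis b hb0 hb1 n N

/-- Let `R₁ = K[X]/(X²)` and `S` a commutative ring. If every
`S`-module fits in a short exact sequence `0 → N → Q → N → 0` with `pd_S Q ≤ n`,
then every `(R₁ × S)`-module fits in a short exact sequence `0 → M → P → M → 0`
with `pd_{R₁ × S} P ≤ n`. -/
theorem stmt18 (K : Type u) [Field K] (S : Type u) [CommRing S] (n : ℕ)
    (hS : ∀ (N : Type u) [AddCommGroup N] [Module S N],
      ∃ (Q : Type u) (_ : AddCommGroup Q) (_ : Module S Q)
        (i : N →ₗ[S] Q) (p : Q →ₗ[S] N),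
        Function.Injective i ∧ Function.Surjective p ∧ Function.Exact i p ∧ pdLE S n Q) :
    ∀ (M : Type u) [AddCommGroup M] [Module (DualNumbersRing K × S) M],
      ∃ (P : Type u) (_ : AddCommGroup P) (_ : Module (DualNumbersRing K × S) P)
        (i : M →ₗ[DualNumbersRing K × S] P) (p : P →ₗ[DualNumbersRing K × S] M),
        Function.Injective i ∧ Function.Surjective p ∧ Function.Exact i p ∧
          pdLE (DualNumbersRing K × S) n P := by
  let : Algebra (DualNumbersRing K × S) (DualNumbersRing K) := (RingHom.fst _ _).toAlgebra
  let : Algebra (DualNumbersRing K × S) S := (RingHom.snd _ _).toAlgebra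
  refine HasSelfExtensionPdLE.of_bijective_algebraMap_prod ?_
    (DualNumbersRing.hasSelfExtensionPdLE K n) hS
  -- with these algebra structures, `algebraMap` into the product is the identity
  convert Function.bijective_id
  rfl
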